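/- arXiv:2107.10117 — 3 statements merged into one kernel-verified Lean document; each statement's English description precedes it below -/
import Mathlib

section
/- Let N ∈ ℕ, δt > 0, and let (ρ_K^n)_{K,n} be real numbers on the cells of a finite partition with measures |K| > 0, satisfying for each K and each n the update |K|(ρ_K^{n+1} − ρ_K^n)/δt + Σ_{σ∈E(K)} |σ| ρ_σ^{n+1} u_{K,σ}^{n+1} = 0, where the face values ρ_σ^{n+1} are upwind (equal to the upstream adjacent cell value according to the sign of u_{K,σ}^{n+1}), the fluxes are conservative (u_{K,σ} = −u_{L,σ} across interior faces σ = K|L, and u_{K,σ} = 0 on boundary faces), and each cell satisfies the discrete divergence-free condition Σ_{σ∈E(K)} |σ| u_{K,σ}^{n+1} = 0. If ρ_min ≤ ρ_K^0 ≤ ρ_max for all K with 0 < ρ_min, then ρ_min ≤ ρ_K^n ≤ ρ_max for all K and all n ≤ N. -/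
/-!
Shift the fluxes of the mass balance by a constant `c` times the discrete divergence, which
vanishes. Taking `c` to be the minimum of the new density, attained at a cell `K₀`, every
outgoing face of `K₀` carries upwind value `c` and every incoming face a value `≥ c`, so the
shifted net outflow of `K₀` is `≤ 0`. Hence the minimum does not drop below the old density at
`K₀`. The scheme commutes with `ρ ↦ -ρ`, which turns the minimum principle into the maximum
principle.
-/

open Finset

section UpwindScheme

variable {C F : Type*} (owner : F → C) (neighbor : F → Option C)

noncomputable def upwind (u : F → ℝ) (ρ : C → ℝ) (σ : F) : ℝ :=
  if 0 ≤ u σ then ρ (owner σ) else ρ ((neighbor σ).getD (owner σ))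

lemma upwind_neg (u : F → ℝ) (ρ : C → ℝ) (σ : F) :
    upwind owner neighbor u (-ρ) σ = -upwind owner neighbor u ρ σ := by
  unfold upwind
  split_ifs <;> rfl

variable [Fintype F] [DecidableEq C]

def outflow (f : F → ℝ) (K : C) : ℝ :=
  (∑ σ, if owner σ = K then f σ else 0) - ∑ σ, if neighbor σ = some K then f σ else 0

lemma outflow_sub_const_mul (f g : F → ℝ) (c : ℝ) (K : C) :
    outflow owner neighbor (fun σ => f σ - c * g σ) K =
      outflow owner neighbor f K - c * outflow owner neighbor g K := by
  simp only [outflow, mul_sub, mul_sum, ← sum_sub_distrib]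
  exact sum_congr rfl fun σ _ => by split_ifs <;> ring

lemma outflow_neg (f : F → ℝ) (K : C) :
    outflow owner neighbor (fun σ => -f σ) K = -outflow owner neighbor f K := by
  simp only [outflow, neg_sub, ← sum_neg_distrib, ← sum_sub_distrib]
  exact sum_congr rfl fun σ _ => by split_ifs <;> ring

lemma outflow_upwind_sub_nonpos {area : F → ℝ} (harea : ∀ σ, 0 ≤ area σ) (u : F → ℝ)
    {ρ : C → ℝ} {K : C} (hK : ∀ L, ρ K ≤ ρ L) :
    outflow owner neighbor (fun σ => area σ * (upwind owner neighbor u ρ σ - ρ K) * u σ) K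
      ≤ 0 := by
  refine sub_nonpos_of_le ((sum_nonpos fun σ _ => ?_).trans (sum_nonneg fun σ _ => ?_))
  · by_cases hown : owner σ = K
    · rw [if_pos hown]
      dsimp only [upwind]
      by_cases hu : 0 ≤ u σ
      · simp [hu, hown]
      · rw [if_neg hu]
        exact mul_nonpos_of_nonneg_of_nonpos
          (mul_nonneg (harea σ) (sub_nonneg.mpr (hK _))) (le_of_not_ge hu)
    · rw [if_neg hown]
  · by_cases hnb : neighbor σ = some K
    · rw [if_pos hnb]
      dsimp only [upwind]
      by_cases hu : 0 ≤ u σ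
      · rw [if_pos hu]
        exact mul_nonneg (mul_nonneg (harea σ) (sub_nonneg.mpr (hK _))) hu
      · simp [hu, hnb]
    · rw [if_neg hnb]

variable (vol : C → ℝ) (area : F → ℝ) (δt : ℝ)

def IsUpwindStep (u : F → ℝ) (ρ ρ' : C → ℝ) : Prop :=
  ∀ K, vol K * (ρ' K - ρ K) / δt +
    outflow owner neighbor (fun σ => area σ * upwind owner neighbor u ρ' σ * u σ) K = 0

variable {owner neighbor vol area δt}

lemma IsUpwindStep.neg {u : F → ℝ} {ρ ρ' : C → ℝ}
    (h : IsUpwindStep owner neighbor vol area δt u ρ ρ') :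
    IsUpwindStep owner neighbor vol area δt u (-ρ) (-ρ') := by
  intro K
  simp only [Pi.neg_apply, upwind_neg, mul_neg, neg_mul, outflow_neg]
  linear_combination -h K

lemma IsUpwindStep.le_of_forall_le [Finite C] (hvol : ∀ K, 0 < vol K) (hδt : 0 < δt)
    (harea : ∀ σ, 0 ≤ area σ) {u : F → ℝ} {ρ ρ' : C → ℝ}
    (hdiv : ∀ K, outflow owner neighbor (fun σ => area σ * u σ) K = 0)
    (h : IsUpwindStep owner neighbor vol area δt u ρ ρ') {m : ℝ} (hm : ∀ K, m ≤ ρ K)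
    (K : C) : m ≤ ρ' K := by
  have : Nonempty C := ⟨K⟩
  obtain ⟨K₀, hK₀⟩ := Finite.exists_min ρ'
  have hshift : vol K₀ * (ρ' K₀ - ρ K₀) / δt + outflow owner neighbor
      (fun σ => area σ * (upwind owner neighbor u ρ' σ - ρ' K₀) * u σ) K₀ = 0 := by
    have hfun : (fun σ => area σ * (upwind owner neighbor u ρ' σ - ρ' K₀) * u σ) =
        fun σ => area σ * upwind owner neighbor u ρ' σ * u σ - ρ' K₀ * (area σ * u σ) := by
      funext σ; ring
    rw [hfun, outflow_sub_const_mul]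
    linear_combination h K₀ - ρ' K₀ * hdiv K₀
  have hgrowth : 0 ≤ vol K₀ * (ρ' K₀ - ρ K₀) / δt := by
    linarith [outflow_upwind_sub_nonpos owner neighbor harea u hK₀]
  have hK₀_ge : ρ K₀ ≤ ρ' K₀ := by
    rwa [le_div_iff₀ hδt, zero_mul, mul_nonneg_iff_of_pos_left (hvol K₀), sub_nonneg] at hgrowth
  exact (hm K₀).trans (hK₀_ge.trans (hK₀ K))

lemma IsUpwindStep.le_of_forall_ge [Finite C] (hvol : ∀ K, 0 < vol K) (hδt : 0 < δt)
    (harea : ∀ σ, 0 ≤ area σ) {u : F → ℝ} {ρ ρ' : C → ℝ}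
    (hdiv : ∀ K, outflow owner neighbor (fun σ => area σ * u σ) K = 0)
    (h : IsUpwindStep owner neighbor vol area δt u ρ ρ') {M : ℝ} (hM : ∀ K, ρ K ≤ M)
    (K : C) : ρ' K ≤ M :=
  neg_le_neg_iff.mp <|
    h.neg.le_of_forall_le hvol hδt harea hdiv (fun L => neg_le_neg (hM L)) K

end UpwindScheme

theorem stmt_5_general {C F : Type*} [Fintype C] [Fintype F] [DecidableEq C]
    (vol : C → ℝ) (hvol : ∀ K, 0 < vol K)
    (area : F → ℝ) (harea : ∀ σ, 0 < area σ)
    (owner : F → C) (neighbor : F → Option C)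
    (N : ℕ) (δt : ℝ) (hδt : 0 < δt)
    (ρ : ℕ → C → ℝ) (u : ℕ → F → ℝ)
    -- upwind face densities
    (ρface : ℕ → F → ℝ)
    (hupw : ∀ n σ, ρface n σ =
      if 0 ≤ u n σ then ρ n (owner σ) else ρ n ((neighbor σ).getD (owner σ)))
    -- discrete divergence-free condition on every cell
    (hdivfree : ∀ n K, n ≤ N →
      ((∑ σ : F, if owner σ = K then area σ * u n σ else 0)
        - ∑ σ : F, if neighbor σ = some K then area σ * u n σ else 0) = 0)
    -- implicit upwind discrete mass balance
    (hmass : ∀ n K, n < N →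
      vol K * (ρ (n + 1) K - ρ n K) / δt
        + ((∑ σ : F, if owner σ = K then area σ * ρface (n + 1) σ * u (n + 1) σ else 0)
          - ∑ σ : F, if neighbor σ = some K then
              area σ * ρface (n + 1) σ * u (n + 1) σ else 0) = 0)
    (ρmin ρmax : ℝ)
    (h0 : ∀ K, ρmin ≤ ρ 0 K ∧ ρ 0 K ≤ ρmax) :
    ∀ n K, n ≤ N → ρmin ≤ ρ n K ∧ ρ n K ≤ ρmax := by
  obtain rfl : ρface = fun n => upwind owner neighbor (u n) (ρ n) :=
    funext fun n => funext (hupw n)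
  have harea' : ∀ σ, 0 ≤ area σ := fun σ => (harea σ).le
  intro n
  induction n with
  | zero => exact fun K _ => h0 K
  | succ n ih =>
    intro K hn
    have hstep : IsUpwindStep owner neighbor vol area δt (u (n + 1)) (ρ n) (ρ (n + 1)) :=
      fun L => hmass n L hn
    have hdiv := fun L => hdivfree (n + 1) L hn
    exact ⟨hstep.le_of_forall_le hvol hδt harea' hdiv (fun L => (ih L (n.le_succ.trans hn)).1) K,
      hstep.le_of_forall_ge hvol hδt harea' hdiv (fun L => (ih L (n.le_succ.trans hn)).2) K⟩

/-- Discrete maximum principle for the implicit upwind finite-volume discretization of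
`∂ₜρ + div(ρu) = 0` with a conservative, discretely divergence-free velocity field and
zero fluxes on boundary faces.  Cells are `C`, faces are `F`; each face has an `owner`
cell and possibly a `neighbor` cell (`none` for boundary faces); `u n σ` is the face
velocity oriented outward from the owner, so conservativity `u_{K,σ} = -u_{L,σ}` is
built into the orientation. -/
theorem stmt_5 {C F : Type*} [Fintype C] [Fintype F] [DecidableEq C]
    (vol : C → ℝ) (hvol : ∀ K, 0 < vol K)
    (area : F → ℝ) (harea : ∀ σ, 0 < area σ)
    (owner : F → C) (neighbor : F → Option C)
    (N : ℕ) (δt : ℝ) (hδt : 0 < δt)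
    (ρ : ℕ → C → ℝ) (u : ℕ → F → ℝ)
    -- zero velocity through boundary faces
    (hbnd : ∀ n σ, neighbor σ = none → u n σ = 0)
    -- upwind face densities
    (ρface : ℕ → F → ℝ)
    (hupw : ∀ n σ, ρface n σ =
      if 0 ≤ u n σ then ρ n (owner σ) else ρ n ((neighbor σ).getD (owner σ)))
    -- discrete divergence-free condition on every cell
    (hdivfree : ∀ n K, n ≤ N →
      ((∑ σ : F, if owner σ = K then area σ * u n σ else 0)
        - ∑ σ : F, if neighbor σ = some K then area σ * u n σ else 0) = 0)
    -- implicit upwind discrete mass balance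
    (hmass : ∀ n K, n < N →
      vol K * (ρ (n + 1) K - ρ n K) / δt
        + ((∑ σ : F, if owner σ = K then area σ * ρface (n + 1) σ * u (n + 1) σ else 0)
          - ∑ σ : F, if neighbor σ = some K then
              area σ * ρface (n + 1) σ * u (n + 1) σ else 0) = 0)
    (ρmin ρmax : ℝ) (hρmin : 0 < ρmin)
    (h0 : ∀ K, ρmin ≤ ρ 0 K ∧ ρ 0 K ≤ ρmax) :
    ∀ n K, n ≤ N → ρmin ≤ ρ n K ∧ ρ n K ≤ ρmax :=
  stmt_5_general vol hvol area harea owner neighbor N δt hδt ρ u ρface hupw hdivfree hmass ρmin ρmax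
    h0
end

section
/- Under the hypotheses of the discrete maximum principle setting (implicit upwind mass balance with conservative, discretely divergence-free fluxes and zero boundary fluxes), each time step satisfies the identity: (1/2)Σ_K |K|(ρ_K^{n+1})² + (δt/2) Σ_{interior faces σ=K|L} |σ|(ρ_L^{n+1} − ρ_K^{n+1})² |u_{K,σ}^{n+1}| + (1/2)Σ_K |K|(ρ_K^{n+1} − ρ_K^n)² = (1/2)Σ_K |K|(ρ_K^n)². In particular Σ_K |K|(ρ_K^{n+1})² ≤ Σ_K |K|(ρ_K^n)², and summing over n yields the weak BV estimate Σ_{n=1}^N δt Σ_{σ=K|L} |σ|(ρ_L^n − ρ_K^n)² |u_{K,σ}^n| ≤ Σ_K |K|(ρ_K^0)². -/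
/-!
Multiply the mass balance of cell `K` by `ρ_K^{n+1}` and sum over the cells. The time
difference gives `½‖ρ^{n+1}‖² + ½‖ρ^{n+1} - ρ^n‖² - ½‖ρ^n‖²` by `(a - b) a = ½a² + ½(a - b)² - ½b²`.
Summing the fluxes by parts turns them into a sum over faces of `|σ| u_σ ρ_σ (ρ_K - ρ_L)`;
subtracting the vanishing sum `Σ_σ |σ| u_σ (ρ_K² - ρ_L²) / 2` (the divergence-free
condition, summed by parts against `ρ²/2`) leaves, face by face, exactly
`½|σ| |u_σ| (ρ_L - ρ_K)²` because the face value is the upwind one. The decay of the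
energy follows, and telescoping it over the time steps gives the weak BV estimate.
-/

open Finset

theorem upwind_flux_sub_half_sq_diff {a b u f : ℝ} (hf : f = if 0 ≤ u then a else b) :
    f * u * (a - b) - u * (a ^ 2 - b ^ 2) / 2 = |u| * (b - a) ^ 2 / 2 := by
  split_ifs at hf with hu
  · rw [abs_of_nonneg hu, hf]; ring
  · rw [abs_of_neg (not_le.mp hu), hf]; ring

theorem sum_Icc_le_of_le_sub_succ {a E : ℕ → ℝ} {N : ℕ}
    (hstep : ∀ n < N, a (n + 1) ≤ E n - E (n + 1)) (hE : 0 ≤ E N) :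
    ∑ n ∈ Icc 1 N, a n ≤ E 0 := by
  suffices ∀ m ≤ N, ∑ n ∈ Icc 1 m, a n ≤ E 0 - E m by linarith [this N le_rfl]
  intro m hm
  induction m with
  | zero => simp
  | succ m ih =>
    rw [sum_Icc_succ_top (by omega)]
    linarith [ih (by omega), hstep m (by omega)]

section UpwindScheme

variable {C F : Type*} [Fintype C] [Fintype F] [DecidableEq C]
  (owner : F → C) (neighbor : F → Option C)

def netOutflow (X : F → ℝ) (K : C) : ℝ :=
  (∑ σ, if owner σ = K then X σ else 0) - ∑ σ, if neighbor σ = some K then X σ else 0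

def energy (vol : C → ℝ) (ρ : C → ℝ) : ℝ :=
  ∑ K, vol K * ρ K ^ 2

def dissipation (area : F → ℝ) (ρ : C → ℝ) (u : F → ℝ) : ℝ :=
  ∑ σ, (neighbor σ).elim 0 fun L => area σ * (ρ L - ρ (owner σ)) ^ 2 * |u σ|

omit [Fintype F] [DecidableEq C] in
theorem energy_nonneg {vol : C → ℝ} (hvol : ∀ K, 0 ≤ vol K) (ρ : C → ℝ) :
    0 ≤ energy vol ρ :=
  sum_nonneg fun K _ => mul_nonneg (hvol K) (sq_nonneg _)

omit [Fintype C] [DecidableEq C] in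
theorem dissipation_nonneg {area : F → ℝ} (harea : ∀ σ, 0 ≤ area σ) (ρ : C → ℝ) (u : F → ℝ) :
    0 ≤ dissipation owner neighbor area ρ u := by
  refine sum_nonneg fun σ _ => ?_
  cases neighbor σ with
  | none => exact le_rfl
  | some L => exact mul_nonneg (mul_nonneg (harea σ) (sq_nonneg _)) (abs_nonneg _)

theorem sum_mul_netOutflow (X : F → ℝ) (g : C → ℝ) :
    ∑ K, g K * netOutflow owner neighbor X K
      = ∑ σ, X σ * (g (owner σ) - (neighbor σ).elim 0 g) := by
  simp only [netOutflow, ← sum_sub_distrib, mul_sum]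
  rw [sum_comm]
  refine sum_congr rfl fun σ _ => ?_
  cases neighbor σ <;> simp [mul_sub, sum_sub_distrib, mul_comm]

variable {owner neighbor}

theorem half_dissipation_eq_sum_mul_netOutflow {area : F → ℝ} {r : C → ℝ} {u f : F → ℝ}
    (hbnd : ∀ σ, neighbor σ = none → u σ = 0)
    (hupw : ∀ σ, f σ = if 0 ≤ u σ then r (owner σ) else r ((neighbor σ).getD (owner σ)))
    (hdiv : ∀ K, netOutflow owner neighbor (fun σ => area σ * u σ) K = 0) :
    dissipation owner neighbor area r u / 2
      = ∑ K, r K * netOutflow owner neighbor (fun σ => area σ * f σ * u σ) K := by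
  have hzero : ∑ K, r K ^ 2 / 2 * netOutflow owner neighbor (fun σ => area σ * u σ) K = 0 := by
    simp [hdiv]
  rw [← sub_zero (∑ K, _), ← hzero, sum_mul_netOutflow, sum_mul_netOutflow, dissipation,
    sum_div, ← sum_sub_distrib]
  refine sum_congr rfl fun σ _ => ?_
  have hupwσ := hupw σ
  cases h : neighbor σ with
  | none => simp [hbnd σ h]
  | some L =>
    rw [h, Option.getD_some] at hupwσ
    simp only [Option.elim]
    linear_combination -area σ * upwind_flux_sub_half_sq_diff hupwσ

theorem energy_step {vol : C → ℝ} {area : F → ℝ} {δt : ℝ} (hδt : δt ≠ 0)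
    {r s : C → ℝ} {u f : F → ℝ}
    (hbnd : ∀ σ, neighbor σ = none → u σ = 0)
    (hupw : ∀ σ, f σ = if 0 ≤ u σ then r (owner σ) else r ((neighbor σ).getD (owner σ)))
    (hdiv : ∀ K, netOutflow owner neighbor (fun σ => area σ * u σ) K = 0)
    (hmass : ∀ K, vol K * (r K - s K) / δt
      + netOutflow owner neighbor (fun σ => area σ * f σ * u σ) K = 0) :
    (1 / 2) * energy vol r + (δt / 2) * dissipation owner neighbor area r u
      + (1 / 2) * energy vol (r - s) = (1 / 2) * energy vol s := by
  have hflux : ∀ K, vol K * r K * (r K - s K)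
      = -δt * (r K * netOutflow owner neighbor (fun σ => area σ * f σ * u σ) K) := by
    intro K
    have := hmass K
    field_simp at this
    linear_combination r K * this
  have hpolar : ∑ K, vol K * r K * (r K - s K)
      = (energy vol r + energy vol (r - s) - energy vol s) / 2 := by
    simp only [energy, ← sum_add_distrib, ← sum_sub_distrib, sum_div, Pi.sub_apply]
    exact sum_congr rfl fun K _ => by ring
  have hdissip := half_dissipation_eq_sum_mul_netOutflow hbnd hupw hdiv
  rw [sum_congr rfl fun K _ => hflux K, ← mul_sum, ← hdissip] at hpolar
  linear_combination -hpolar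

end UpwindScheme

/-- Weak BV estimate for the implicit upwind discretization of the transport equation.
Same mesh model as the discrete maximum principle: cells `C`, faces `F`, each face with
an `owner` cell and possibly a `neighbor` cell (`none` for boundary faces), face
velocities oriented outward from the owner (so conservativity is built in) and
vanishing on boundary faces.  The theorem states the per-time-step identity, the
resulting decay of the weighted `ℓ²` norm of the density, and the summed weak BV
estimate. -/
theorem stmt_6 {C F : Type*} [Fintype C] [Fintype F] [DecidableEq C]
    (vol : C → ℝ) (hvol : ∀ K, 0 < vol K)
    (area : F → ℝ) (harea : ∀ σ, 0 < area σ)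
    (owner : F → C) (neighbor : F → Option C)
    (N : ℕ) (δt : ℝ) (hδt : 0 < δt)
    (ρ : ℕ → C → ℝ) (u : ℕ → F → ℝ)
    (hbnd : ∀ n σ, neighbor σ = none → u n σ = 0)
    (ρface : ℕ → F → ℝ)
    (hupw : ∀ n σ, ρface n σ =
      if 0 ≤ u n σ then ρ n (owner σ) else ρ n ((neighbor σ).getD (owner σ)))
    (hdivfree : ∀ n K, n ≤ N →
      ((∑ σ : F, if owner σ = K then area σ * u n σ else 0)
        - ∑ σ : F, if neighbor σ = some K then area σ * u n σ else 0) = 0)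
    (hmass : ∀ n K, n < N →
      vol K * (ρ (n + 1) K - ρ n K) / δt
        + ((∑ σ : F, if owner σ = K then area σ * ρface (n + 1) σ * u (n + 1) σ else 0)
          - ∑ σ : F, if neighbor σ = some K then
              area σ * ρface (n + 1) σ * u (n + 1) σ else 0) = 0) :
    (∀ n, n < N →
      (1 / 2) * ∑ K : C, vol K * (ρ (n + 1) K) ^ 2
        + (δt / 2) * ∑ σ : F, ((neighbor σ).elim 0 fun L =>
            area σ * (ρ (n + 1) L - ρ (n + 1) (owner σ)) ^ 2 * |u (n + 1) σ|)
        + (1 / 2) * ∑ K : C, vol K * (ρ (n + 1) K - ρ n K) ^ 2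
      = (1 / 2) * ∑ K : C, vol K * (ρ n K) ^ 2)
    ∧ (∀ n, n < N →
        ∑ K : C, vol K * (ρ (n + 1) K) ^ 2 ≤ ∑ K : C, vol K * (ρ n K) ^ 2)
    ∧ (∑ n ∈ Finset.Icc 1 N, δt * ∑ σ : F, ((neighbor σ).elim 0 fun L =>
          area σ * (ρ n L - ρ n (owner σ)) ^ 2 * |u n σ|)
        ≤ ∑ K : C, vol K * (ρ 0 K) ^ 2) := by
  have step : ∀ n < N,
      (1 / 2) * energy vol (ρ (n + 1))
        + (δt / 2) * dissipation owner neighbor area (ρ (n + 1)) (u (n + 1))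
        + (1 / 2) * energy vol (ρ (n + 1) - ρ n) = (1 / 2) * energy vol (ρ n) :=
    fun n hn => energy_step hδt.ne' (hbnd (n + 1)) (hupw (n + 1))
      (fun K => hdivfree (n + 1) K hn) (fun K => hmass n K hn)
  have hvol' : ∀ K, 0 ≤ vol K := fun K => (hvol K).le
  have hdissip : ∀ n, 0 ≤ dissipation owner neighbor area (ρ n) (u n) :=
    fun n => dissipation_nonneg owner neighbor (fun σ => (harea σ).le) _ _
  have decay : ∀ n < N, δt * dissipation owner neighbor area (ρ (n + 1)) (u (n + 1))
      ≤ energy vol (ρ n) - energy vol (ρ (n + 1)) :=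
    fun n hn => by linarith [step n hn, energy_nonneg hvol' (ρ (n + 1) - ρ n)]
  refine ⟨step, fun n hn => ?_, ?_⟩
  · show energy vol (ρ (n + 1)) ≤ energy vol (ρ n)
    linarith [decay n hn, mul_nonneg hδt.le (hdissip (n + 1))]
  · exact sum_Icc_le_of_le_sub_succ
      (a := fun n => δt * dissipation owner neighbor area (ρ n) (u n))
      (E := fun n => energy vol (ρ n)) decay (energy_nonneg hvol' _)
end

section
/- Let u: ℝ → ℝ be a piecewise constant function of a 1D mesh with nodes x_0 < x_1 < ... < x_M and mesh size h, u constant equal to u_i on (x_{i-1}, x_i), and u = 0 outside the support interval. Then for every η ∈ ℝ, ‖u(·+η) − u‖²_{L²(ℝ)} ≤ ‖u‖²_{1,h,0} |η|(|η| + C h) for a suitable constant C, where ‖u‖²_{1,h,0} = Σ_i (u_{i+1}−u_i)²·(length factors) is the discrete H¹₀ seminorm. -/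
open MeasureTheory

private lemma tele_sum (f : ℕ → ℝ) : ∀ q p : ℕ, p ≤ q →
    ∑ i ∈ Finset.Icc p q, (f (i + 1) - f i) = f (q + 1) - f p := by
  intro q
  induction q with
  | zero =>
    intro p hp
    interval_cases p
    simp
  | succ n ih =>
    intro p hp
    rcases Nat.lt_or_ge p (n + 1) with h1 | h2
    · have hpn : p ≤ n := Nat.lt_succ_iff.mp h1
      rw [Finset.sum_Icc_succ_top (by omega), ih p hpn]
      ring
    · have : p = n + 1 := le_antisymm hp h2
      subst this
      simp

private lemma aux_translate (M : ℕ) (hM : 0 < M) (x : ℕ → ℝ)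
    (hmono : ∀ i < M, x i < x (i + 1))
    (h : ℝ) (hmesh : ∀ i < M, x (i + 1) - x i ≤ h)
    (v : ℕ → ℝ) (hv0 : v 0 = 0) (hvM : v (M + 1) = 0)
    (u : ℝ → ℝ)
    (hucell : ∀ i, 1 ≤ i → i ≤ M → ∀ y ∈ Set.Ioo (x (i - 1)) (x i), u y = v i)
    (huout : ∀ y, y ∉ Set.Ioo (x 0) (x M) → u y = 0)
    (c : ℕ → ℝ) (hc0 : c 0 = x 0) (hcM : c (M + 1) = x M)
    (hc : ∀ i, 1 ≤ i → i ≤ M → c i = (x (i - 1) + x i) / 2)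
    (η : ℝ) (hη : 0 < η) :
    (∫ y : ℝ, (u (y + η) - u y) ^ 2)
      ≤ (∑ i ∈ Finset.range (M + 1), (v (i + 1) - v i) ^ 2 / (c (i + 1) - c i))
          * η * (η + h) := by
  classical
  -- basic monotonicity facts
  have hxle : ∀ j ≤ M, ∀ i ≤ j, x i ≤ x j := by
    intro j
    induction j with
    | zero => intro _ i hi; interval_cases i; exact le_refl _
    | succ n ih =>
      intro hn i hi
      rcases Nat.eq_or_lt_of_le hi with h' | h'
      · subst h'; exact le_refl _
      · exact le_trans (ih (by omega) i (by omega)) (le_of_lt (hmono n (by omega)))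
  have hxlt : ∀ i j, i < j → j ≤ M → x i < x j := by
    intro i j hij hjM
    obtain ⟨k, rfl⟩ : ∃ k, j = k + 1 := ⟨j - 1, by omega⟩
    exact lt_of_le_of_lt (hxle k (by omega) i (by omega)) (hmono k (by omega))
  have hh : 0 < h := lt_of_lt_of_le (by linarith [hmono 0 hM]) (hmesh 0 hM)
  -- positivity of the weights d i = c (i+1) - c i
  have hd : ∀ i ≤ M, 0 < c (i + 1) - c i := by
    intro i hiM
    rcases Nat.eq_zero_or_pos i with rfl | hi1
    · rw [hc 1 le_rfl hM, hc0]
      have h1 := hmono 0 hM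
      norm_num
      linarith
    · rcases Nat.lt_or_ge i M with hiM' | hiM'
      · rw [hc (i + 1) (by omega) (by omega), hc i hi1 hiM]
        have h1 : x (i - 1) < x (i + 1) := hxlt (i - 1) (i + 1) (by omega) (by omega)
        have e : i + 1 - 1 = i := by omega
        rw [e]
        linarith
      · have hieq : i = M := le_antisymm hiM hiM'
        rw [hieq, hcM, hc M (by omega) le_rfl]
        have h1 := hmono (M - 1) (by omega)
        have e : M - 1 + 1 = M := by omega
        rw [e] at h1
        linarith
  -- bounds on the cell centers
  have hcub : ∀ i ≤ M, c (i + 1) ≤ x i + h / 2 := by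
    intro i hiM
    rcases Nat.lt_or_ge i M with h1 | h1
    · rw [hc (i + 1) (by omega) (by omega)]
      have h2 := hmesh i h1
      have e : i + 1 - 1 = i := by omega
      rw [e]
      linarith
    · have hieq : i = M := le_antisymm hiM h1
      rw [hieq, hcM]
      linarith
  have hclb : ∀ i ≤ M, x i - h / 2 ≤ c i := by
    intro i hiM
    rcases Nat.eq_zero_or_pos i with rfl | h1
    · rw [hc0]; linarith
    · rw [hc i h1 hiM]
      obtain ⟨k, rfl⟩ : ∃ k, i = k + 1 := ⟨i - 1, by omega⟩
      have h2 := hmesh k (by omega)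
      have e : k + 1 - 1 = k := by omega
      rw [e]
      linarith
  -- the jump indicator functions
  set G : ℕ → ℝ → ℝ := fun i y => if x i - η < y ∧ y ≤ x i then (1 : ℝ) else 0 with hGdef
  have hGsq : ∀ i y, G i y * G i y = G i y := by
    intro i y
    simp only [hGdef]
    split_ifs <;> norm_num
  have hGnonneg : ∀ i y, 0 ≤ G i y := by
    intro i y
    simp only [hGdef]
    split_ifs <;> norm_num
  -- the step function F agrees with u away from the nodes
  have huF : ∀ z, (∀ i ≤ M, z ≠ x i) →
      u z = ∑ i ∈ Finset.range (M + 1), (v (i + 1) - v i) * (if x i < z then (1 : ℝ) else 0) := by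
    intro z hz
    rcases lt_trichotomy z (x 0) with hz0 | hz0 | hz0
    · rw [huout z (by
        simp only [Set.mem_Ioo, not_and]
        intro h'
        linarith)]
      symm
      apply Finset.sum_eq_zero
      intro i hi
      simp only [Finset.mem_range] at hi
      rw [if_neg (by
        have : x 0 ≤ x i := hxle i (by omega) 0 (by omega)
        push_neg
        linarith), mul_zero]
    · exact absurd hz0 (hz 0 (by omega))
    · rcases lt_trichotomy z (x M) with hzM | hzM | hzM
      · -- interior: find the cell containing z
        have hex : ∃ i, i ≤ M ∧ z < x i := ⟨M, le_rfl, hzM⟩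
        have hexP : ∃ i, z < x i := ⟨M, hzM⟩
        set j := Nat.find hexP with hjdef
        have hjP : z < x j := Nat.find_spec hexP
        have hjM : j ≤ M := Nat.find_le hzM
        have hj1 : 1 ≤ j := by
          by_contra h'
          have : j = 0 := by omega
          rw [this] at hjP
          linarith
        have hjm : ¬ z < x (j - 1) := Nat.find_min hexP (by omega)
        push_neg at hjm
        have hjm' : x (j - 1) < z := lt_of_le_of_ne hjm (fun h' => hz (j - 1) (by omega) h'.symm)
        rw [hucell j hj1 hjM z ⟨hjm', hjP⟩]
        have e1 : ∑ i ∈ Finset.range (M + 1), (v (i + 1) - v i) * (if x i < z then (1 : ℝ) else 0)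
            = ∑ i ∈ Finset.range (M + 1), (if i < j then v (i + 1) - v i else 0) := by
          apply Finset.sum_congr rfl
          intro i hi
          simp only [Finset.mem_range] at hi
          by_cases hij : i < j
          · rw [if_pos hij, if_pos (lt_of_le_of_lt (hxle (j - 1) (by omega) i (by omega)) hjm'),
              mul_one]
          · push_neg at hij
            rw [if_neg hij.not_gt, if_neg (by
              push_neg
              exact le_trans (le_of_lt hjP) (hxle i (by omega) j hij)), mul_zero]
        have e2 : (Finset.range (M + 1)).filter (fun i => i < j) = Finset.range j := by
          ext i
          simp only [Finset.mem_filter, Finset.mem_range]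
          omega
        rw [e1, ← Finset.sum_filter, e2, Finset.sum_range_sub v j, hv0, sub_zero]
      · exact absurd hzM (hz M le_rfl)
      · rw [huout z (by
          simp only [Set.mem_Ioo, not_and]
          intro h'
          linarith)]
        symm
        have e1 : ∑ i ∈ Finset.range (M + 1), (v (i + 1) - v i) * (if x i < z then (1 : ℝ) else 0)
            = ∑ i ∈ Finset.range (M + 1), (v (i + 1) - v i) := by
          apply Finset.sum_congr rfl
          intro i hi
          simp only [Finset.mem_range] at hi
          rw [if_pos (lt_of_le_of_lt (hxle M le_rfl i (by omega)) hzM), mul_one]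
        rw [e1, Finset.sum_range_sub v (M + 1), hv0, hvM, sub_zero]
  -- the pointwise jump decomposition of the translate difference
  have hkey : ∀ y : ℝ, (∀ i ≤ M, y ≠ x i) → (∀ i ≤ M, y + η ≠ x i) →
      u (y + η) - u y = ∑ i ∈ Finset.range (M + 1), (v (i + 1) - v i) * G i y := by
    intro y h1 h2
    rw [huF (y + η) h2, huF y h1, ← Finset.sum_sub_distrib]
    apply Finset.sum_congr rfl
    intro i _
    rw [← mul_sub]
    congr 1
    simp only [hGdef]
    by_cases hA : x i < y + η
    · by_cases hB : x i < y
      · rw [if_pos hA, if_pos hB, if_neg (by rintro ⟨-, hyy⟩; linarith)]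
        ring
      · push_neg at hB
        rw [if_pos hA, if_neg (not_lt.mpr hB), if_pos ⟨by linarith, hB⟩]
        ring
    · push_neg at hA
      have hB : ¬ x i < y := by intro hB; linarith
      rw [if_neg (not_lt.mpr hA), if_neg hB, if_neg (by rintro ⟨hyy, -⟩; linarith)]
      ring
  -- almost-everywhere identification of the integrand
  have hbad : ∀ᵐ y : ℝ, (u (y + η) - u y) ^ 2
      = (∑ i ∈ Finset.range (M + 1), (v (i + 1) - v i) * G i y) ^ 2 := by
    have hBfin : ((x '' Set.Iic M) ∪ ((fun i => x i - η) '' Set.Iic M)).Finite :=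
      ((Set.finite_Iic M).image x).union ((Set.finite_Iic M).image _)
    have h0 : volume ((x '' Set.Iic M) ∪ ((fun i => x i - η) '' Set.Iic M)) = 0 :=
      hBfin.measure_zero _
    have hae : ∀ᵐ y : ℝ, y ∉ (x '' Set.Iic M) ∪ ((fun i => x i - η) '' Set.Iic M) :=
      measure_eq_zero_iff_ae_notMem.mp h0
    filter_upwards [hae] with y hy
    have h1 : ∀ i ≤ M, y ≠ x i := by
      intro i hi hyx
      exact hy (Set.mem_union_left _ ⟨i, Set.mem_Iic.mpr hi, hyx.symm⟩)
    have h2 : ∀ i ≤ M, y + η ≠ x i := by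
      intro i hi hyx
      exact hy (Set.mem_union_right _ ⟨i, Set.mem_Iic.mpr hi, by simp; linarith⟩)
    rw [hkey y h1 h2]
  -- integrability of the indicators
  have hGind : ∀ i, (fun y => G i y)
      = Set.indicator (Set.Ioc (x i - η) (x i)) (fun _ => (1 : ℝ)) := by
    intro i
    funext y
    rw [Set.indicator_apply]
    simp only [hGdef, Set.mem_Ioc]
  have hGint : ∀ i, Integrable (fun y => G i y) := by
    intro i
    rw [hGind i]
    exact (integrable_indicator_iff measurableSet_Ioc).2
      (integrableOn_const measure_Ioc_lt_top.ne)
  have hGvol : ∀ i, (∫ y : ℝ, G i y) = η := by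
    intro i
    rw [hGind i, integral_indicator_const (1 : ℝ) measurableSet_Ioc, measureReal_def, Real.volume_Ioc,
      show x i - (x i - η) = η by ring, smul_eq_mul, mul_one,
      ENNReal.toReal_ofReal hη.le]
  -- the weighted indicator sum is bounded by η + h
  have hsum_d : ∀ y : ℝ, ∑ i ∈ Finset.range (M + 1), (c (i + 1) - c i) * G i y ≤ η + h := by
    intro y
    have e1 : ∑ i ∈ Finset.range (M + 1), (c (i + 1) - c i) * G i y
        = ∑ i ∈ (Finset.range (M + 1)).filter (fun i => x i - η < y ∧ y ≤ x i),
            (c (i + 1) - c i) := by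
      rw [Finset.sum_filter]
      apply Finset.sum_congr rfl
      intro i _
      simp only [hGdef]
      by_cases hcond : x i - η < y ∧ y ≤ x i
      · rw [if_pos hcond, if_pos hcond, mul_one]
      · rw [if_neg hcond, if_neg hcond, mul_zero]
    rw [e1]
    set A := (Finset.range (M + 1)).filter (fun i => x i - η < y ∧ y ≤ x i) with hA
    rcases A.eq_empty_or_nonempty with hAe | hAne
    · rw [hAe]
      simp
      linarith
    · set p := A.min' hAne with hp
      set q := A.max' hAne with hq
      have hpA : p ∈ A := A.min'_mem hAne
      have hqA : q ∈ A := A.max'_mem hAne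
      have hpq : p ≤ q := A.min'_le q hqA
      have hqM : q ≤ M := by
        have := (Finset.mem_filter.mp hqA).1
        simp only [Finset.mem_range] at this
        omega
      have hpM : p ≤ M := le_trans hpq hqM
      have hsub : A ⊆ Finset.Icc p q := fun i hi =>
        Finset.mem_Icc.mpr ⟨A.min'_le i hi, A.le_max' i hi⟩
      have h2 : ∑ i ∈ A, (c (i + 1) - c i) ≤ ∑ i ∈ Finset.Icc p q, (c (i + 1) - c i) := by
        apply Finset.sum_le_sum_of_subset_of_nonneg hsub
        intro i hi _
        have hiM : i ≤ M := by
          have := Finset.mem_Icc.mp hi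
          omega
        exact (hd i hiM).le
      have h3 : ∑ i ∈ Finset.Icc p q, (c (i + 1) - c i) = c (q + 1) - c p := tele_sum c q p hpq
      have hyp := (Finset.mem_filter.mp hpA).2
      have hyq := (Finset.mem_filter.mp hqA).2
      have b1 := hcub q hqM
      have b2 := hclb p hpM
      have hxqp : x q - x p < η := by linarith [hyp.2, hyq.1]
      linarith [h2, h3]
  -- pointwise Cauchy-Schwarz estimate
  have hCS : ∀ y : ℝ, (∑ i ∈ Finset.range (M + 1), (v (i + 1) - v i) * G i y) ^ 2
      ≤ (∑ i ∈ Finset.range (M + 1), (v (i + 1) - v i) ^ 2 / (c (i + 1) - c i) * G i y)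
          * (η + h) := by
    intro y
    have cs := Finset.sum_mul_sq_le_sq_mul_sq (Finset.range (M + 1))
      (fun i => (v (i + 1) - v i) / Real.sqrt (c (i + 1) - c i) * G i y)
      (fun i => Real.sqrt (c (i + 1) - c i) * G i y)
    have e1 : ∑ i ∈ Finset.range (M + 1),
        ((v (i + 1) - v i) / Real.sqrt (c (i + 1) - c i) * G i y)
          * (Real.sqrt (c (i + 1) - c i) * G i y)
        = ∑ i ∈ Finset.range (M + 1), (v (i + 1) - v i) * G i y := by
      apply Finset.sum_congr rfl
      intro i hi
      simp only [Finset.mem_range] at hi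
      have hdi := hd i (by omega)
      have hs : Real.sqrt (c (i + 1) - c i) ≠ 0 := ne_of_gt (Real.sqrt_pos.mpr hdi)
      have e : ((v (i + 1) - v i) / Real.sqrt (c (i + 1) - c i) * G i y)
            * (Real.sqrt (c (i + 1) - c i) * G i y)
          = (v (i + 1) - v i) * (Real.sqrt (c (i + 1) - c i)
              * (Real.sqrt (c (i + 1) - c i))⁻¹) * (G i y * G i y) := by
        ring
      rw [e, mul_inv_cancel₀ hs, hGsq, mul_one]
    have e2 : ∑ i ∈ Finset.range (M + 1),
        ((v (i + 1) - v i) / Real.sqrt (c (i + 1) - c i) * G i y) ^ 2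
        = ∑ i ∈ Finset.range (M + 1), (v (i + 1) - v i) ^ 2 / (c (i + 1) - c i) * G i y := by
      apply Finset.sum_congr rfl
      intro i hi
      simp only [Finset.mem_range] at hi
      have hdi := hd i (by omega)
      rw [mul_pow, div_pow, Real.sq_sqrt hdi.le, pow_two (G i y), hGsq]
    have e3 : ∑ i ∈ Finset.range (M + 1), (Real.sqrt (c (i + 1) - c i) * G i y) ^ 2
        = ∑ i ∈ Finset.range (M + 1), (c (i + 1) - c i) * G i y := by
      apply Finset.sum_congr rfl
      intro i hi
      simp only [Finset.mem_range] at hi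
      have hdi := hd i (by omega)
      rw [mul_pow, Real.sq_sqrt hdi.le, pow_two (G i y), hGsq]
    rw [e1, e2, e3] at cs
    refine le_trans cs ?_
    apply mul_le_mul_of_nonneg_left (hsum_d y)
    apply Finset.sum_nonneg
    intro i hi
    simp only [Finset.mem_range] at hi
    exact mul_nonneg (div_nonneg (sq_nonneg _) (hd i (by omega)).le) (hGnonneg i y)
  -- put everything together
  calc (∫ y : ℝ, (u (y + η) - u y) ^ 2)
      = ∫ y : ℝ, (∑ i ∈ Finset.range (M + 1), (v (i + 1) - v i) * G i y) ^ 2 :=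
        integral_congr_ae hbad
    _ ≤ ∫ y : ℝ, ∑ i ∈ Finset.range (M + 1),
          ((η + h) * ((v (i + 1) - v i) ^ 2 / (c (i + 1) - c i))) * G i y := by
        apply integral_mono_of_nonneg
        · filter_upwards with y
          exact sq_nonneg _
        · exact integrable_finset_sum _ (fun i _ => (hGint i).const_mul _)
        · filter_upwards with y
          refine le_trans (hCS y) (le_of_eq ?_)
          rw [Finset.sum_mul]
          apply Finset.sum_congr rfl
          intro i _
          ring
    _ = ∑ i ∈ Finset.range (M + 1),
          ((η + h) * ((v (i + 1) - v i) ^ 2 / (c (i + 1) - c i))) * η := by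
        rw [integral_finset_sum _ (fun i _ => (hGint i).const_mul _)]
        apply Finset.sum_congr rfl
        intro i _
        rw [integral_const_mul, hGvol i]
    _ = (∑ i ∈ Finset.range (M + 1), (v (i + 1) - v i) ^ 2 / (c (i + 1) - c i))
          * η * (η + h) := by
        rw [Finset.sum_mul, Finset.sum_mul]
        apply Finset.sum_congr rfl
        intro i _
        ring

/-- One-dimensional discrete space-translate estimate: for a piecewise constant
function `u` on a 1D mesh `x 0 < x 1 < ... < x M` (with value `v i` on the cell
`(x (i-1), x i)` for `1 ≤ i ≤ M`) extended by zero outside `(x 0, x M)`, the `L²`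
norm of the translate difference is controlled by the discrete `H¹₀` seminorm
`S = Σᵢ (v (i+1) − v i)² / (c (i+1) − c i)` (where `c` are the cell centers,
with the boundary conventions `v 0 = v (M+1) = 0`, `c 0 = x 0`, `c (M+1) = x M`)
times `|η| (|η| + C h)`, where `h` bounds the cell lengths. -/
theorem stmt_11 (M : ℕ) (hM : 0 < M) (x : ℕ → ℝ)
    (hmono : ∀ i < M, x i < x (i + 1))
    (h : ℝ) (hmesh : ∀ i < M, x (i + 1) - x i ≤ h)
    (v : ℕ → ℝ) (hv0 : v 0 = 0) (hvM : v (M + 1) = 0)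
    (u : ℝ → ℝ)
    (hucell : ∀ i, 1 ≤ i → i ≤ M → ∀ y ∈ Set.Ioo (x (i - 1)) (x i), u y = v i)
    (huout : ∀ y, y ∉ Set.Ioo (x 0) (x M) → u y = 0)
    (c : ℕ → ℝ) (hc0 : c 0 = x 0) (hcM : c (M + 1) = x M)
    (hc : ∀ i, 1 ≤ i → i ≤ M → c i = (x (i - 1) + x i) / 2) :
    ∃ C > 0, ∀ η : ℝ,
      (∫ y : ℝ, (u (y + η) - u y) ^ 2)
        ≤ (∑ i ∈ Finset.range (M + 1), (v (i + 1) - v i) ^ 2 / (c (i + 1) - c i))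
            * |η| * (|η| + C * h) := by
  refine ⟨1, one_pos, fun η => ?_⟩
  rcases lt_trichotomy η 0 with hη | hη | hη
  · have key := aux_translate M hM x hmono h hmesh v hv0 hvM u hucell huout c hc0 hcM hc
      (-η) (by linarith)
    have e := integral_add_right_eq_self (μ := volume) (fun z : ℝ => (u (z + -η) - u z) ^ 2) η
    have e' : (∫ y : ℝ, (u (y + η + -η) - u (y + η)) ^ 2)
        = ∫ y : ℝ, (u (y + η) - u y) ^ 2 := by
      congr 1
      funext y
      rw [show y + η + -η = y by ring]
      ring
    rw [← e', e, abs_of_neg hη, one_mul]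
    exact key
  · subst hη
    simp
  · have key := aux_translate M hM x hmono h hmesh v hv0 hvM u hucell huout c hc0 hcM hc η hη
    rw [abs_of_pos hη, one_mul]
    exact key
end
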